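/- Let σ, γ, c_∞ > 0 and let τ_γ : [0,∞) → [0,∞) satisfy τ_γ(w) ≤ (1−γm)w for w > R₁ and τ_γ(w) ≤ (1+γL)w for all w ≥ 0 (with L, m > 0, R₁ ≥ 0). Let Q_γ be the sticky kernel on [0,∞): from w, with probability p(w,g) = min(1, φ_{σ²γ}(τ_γ(w)+γc_∞ − σ√γ g)/φ_{σ²γ}(σ√γ g)) the chain jumps to 0, otherwise moves to τ_γ(w)+γc_∞ − 2σ√γ g, where g is standard Gaussian. Then for all w ≥ 0, ∫ w̃ Q_γ(w, dw̃) = τ_γ(w) + γc_∞ ≤ (1−γm) w 1_{(R₁,∞)}(w) + (1+γL) w 1_{(0,R₁]}(w) + γc_∞. -/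

import Mathlib

open MeasureTheory

/-- Standard Gaussian density. -/
noncomputable def stdG (g : ℝ) : ℝ :=
  (Real.sqrt (2 * Real.pi))⁻¹ * Real.exp (-g ^ 2 / 2)

/-- Density of the one-dimensional centered Gaussian with variance `v`. -/
noncomputable def gpdf (v x : ℝ) : ℝ :=
  (Real.sqrt (2 * Real.pi * v))⁻¹ * Real.exp (-x ^ 2 / (2 * v))

/-- `p̄(t, g) = min(1, φ_v(t − √v g)/φ_v(√v g))` with `v = σ²γ` and `√v = σ√γ`. -/
noncomputable def pbar (σ γ t g : ℝ) : ℝ :=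
  min 1 (gpdf (σ ^ 2 * γ) (t - σ * Real.sqrt γ * g) /
    gpdf (σ ^ 2 * γ) (σ * Real.sqrt γ * g))

/-!
With `a = σ√γ` and `d = t / a`, the Gaussian likelihood ratio gives
`p̄(t, g) φ(g) = min (φ g) (φ (g - d))`, which is symmetric under the reflection `g ↦ d - g`,
while the displacement `t - 2 a g = a (d - 2 g)` changes sign under it. Hence the absorbed mass
carries no first moment, and the mean of the kernel is that of the unrejected proposal
`t - 2 a g`, namely `t`.
-/

open Real

theorem integral_eq_zero_of_comp_sub_left_eq_neg {G E : Type*} [MeasurableSpace G] [AddGroup G]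
    [MeasurableAdd G] [MeasurableNeg G] [NormedAddCommGroup E] [NormedSpace ℝ E]
    (μ : Measure G) [μ.IsNegInvariant] [μ.IsAddLeftInvariant] {f : G → E} (d : G)
    (hf : ∀ x, f (d - x) = -f x) : ∫ x, f x ∂μ = 0 := by
  have h := integral_sub_left_eq_self f μ d
  simp only [hf, integral_neg] at h
  have h2 : (2 : ℝ) • ∫ x, f x ∂μ = 0 := by
    rw [two_smul]; nth_rw 1 [← h]; exact neg_add_cancel _
  exact (smul_eq_zero.mp h2).resolve_left two_ne_zero

lemma stdG_eq_gaussianPDFReal : stdG = ProbabilityTheory.gaussianPDFReal 0 1 := by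
  ext g; simp [stdG, ProbabilityTheory.gaussianPDFReal]

lemma stdG_neg (g : ℝ) : stdG (-g) = stdG g := by simp [stdG]

lemma stdG_nonneg (g : ℝ) : 0 ≤ stdG g := by unfold stdG; positivity

lemma continuous_stdG : Continuous stdG := by unfold stdG; fun_prop

lemma integrable_stdG : Integrable stdG :=
  stdG_eq_gaussianPDFReal ▸ ProbabilityTheory.integrable_gaussianPDFReal 0 1

lemma integral_stdG : ∫ g, stdG g = 1 :=
  stdG_eq_gaussianPDFReal ▸ ProbabilityTheory.integral_gaussianPDFReal_eq_one 0 one_ne_zero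

lemma integrable_mul_stdG : Integrable fun g => g * stdG g := by
  refine ((integrable_mul_exp_neg_mul_sq (b := 1 / 2) (by norm_num)).const_mul
    (√(2 * π))⁻¹).congr (.of_forall fun g => ?_)
  simp only [stdG]; ring_nf

lemma integral_mul_stdG : ∫ g, g * stdG g = 0 :=
  integral_eq_zero_of_comp_sub_left_eq_neg volume 0 fun g => by simp [stdG_neg]

lemma integrable_affine_mul_stdG (t b : ℝ) : Integrable fun g => (t - b * g) * stdG g := by
  refine ((integrable_stdG.const_mul t).sub (integrable_mul_stdG.const_mul b)).congr
    (.of_forall fun g => ?_)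
  simp only [Pi.sub_apply]; ring

lemma integral_affine_mul_stdG (t b : ℝ) : ∫ g, (t - b * g) * stdG g = t := by
  simp only [sub_mul, mul_assoc]
  rw [integral_sub (integrable_stdG.const_mul t) (integrable_mul_stdG.const_mul b),
    integral_const_mul, integral_const_mul, integral_stdG, integral_mul_stdG]
  ring

lemma stdG_mul_exp (d g : ℝ) : stdG g * exp (d * g - d ^ 2 / 2) = stdG (g - d) := by
  unfold stdG
  rw [mul_assoc, ← exp_add]
  ring_nf

lemma integral_mul_min_stdG_shift (d : ℝ) :
    ∫ g, (d - 2 * g) * min (stdG g) (stdG (g - d)) = 0 :=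
  integral_eq_zero_of_comp_sub_left_eq_neg volume d fun g => by
    rw [sub_sub_cancel_left, stdG_neg, min_comm, ← stdG_neg (g - d), neg_sub]
    ring

lemma integrable_mul_min_stdG_shift (d : ℝ) :
    Integrable fun g => (d - 2 * g) * min (stdG g) (stdG (g - d)) := by
  refine (integrable_affine_mul_stdG d 2).mono
    (by have := continuous_stdG; fun_prop) (.of_forall fun g => ?_)
  rw [norm_mul, norm_mul]
  gcongr
  rw [Real.norm_of_nonneg (le_min (stdG_nonneg _) (stdG_nonneg _)),
    Real.norm_of_nonneg (stdG_nonneg _)]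
  exact min_le_left _ _

lemma gpdf_div_gpdf {v : ℝ} (hv : 0 < v) (x y : ℝ) :
    gpdf v x / gpdf v y = exp ((y ^ 2 - x ^ 2) / (2 * v)) := by
  unfold gpdf
  rw [mul_div_mul_left _ _ (by positivity), ← exp_sub]
  ring_nf

lemma pbar_eq_min_exp {σ γ : ℝ} (hσ : σ ≠ 0) (hγ : 0 < γ) (t g : ℝ) :
    pbar σ γ t g = min 1 (exp (t / (σ * √γ) * g - (t / (σ * √γ)) ^ 2 / 2)) := by
  have ha : σ * √γ ≠ 0 := mul_ne_zero hσ (sqrt_pos.mpr hγ).ne'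
  have hv : σ ^ 2 * γ = (σ * √γ) ^ 2 := by rw [mul_pow, sq_sqrt hγ.le]
  rw [pbar, hv, gpdf_div_gpdf (by positivity)]
  congr 2
  field_simp
  ring

lemma pbar_mul_stdG {σ γ : ℝ} (hσ : σ ≠ 0) (hγ : 0 < γ) (t g : ℝ) :
    pbar σ γ t g * stdG g = min (stdG g) (stdG (g - t / (σ * √γ))) := by
  rw [pbar_eq_min_exp hσ hγ, min_mul_of_nonneg _ _ (stdG_nonneg g), one_mul, mul_comm,
    stdG_mul_exp]

theorem sticky_kernel_mean {σ γ : ℝ} (hσ : σ ≠ 0) (hγ : 0 < γ) (t : ℝ) :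
    ∫ g, (t - 2 * σ * √γ * g) * (1 - pbar σ γ t g) * stdG g = t := by
  set a := σ * √γ
  have ha : a ≠ 0 := mul_ne_zero hσ (sqrt_pos.mpr hγ).ne'
  have hsplit : ∀ g, (t - 2 * σ * √γ * g) * (1 - pbar σ γ t g) * stdG g =
      (t - 2 * a * g) * stdG g - a * ((t / a - 2 * g) * min (stdG g) (stdG (g - t / a))) := by
    intro g
    rw [← pbar_mul_stdG hσ hγ]
    field_simp
    ring
  simp only [hsplit]
  rw [integral_sub (integrable_affine_mul_stdG _ _) ((integrable_mul_min_stdG_shift _).const_mul a),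
    integral_const_mul, integral_affine_mul_stdG, integral_mul_min_stdG_shift, mul_zero, sub_zero]

theorem sticky_kernel_drift_general (σ γ c L m R₁ : ℝ) (τ : ℝ → ℝ)
    (hσ : 0 < σ) (hγ : 0 < γ)
    (hτm : ∀ w, R₁ < w → τ w ≤ (1 - γ * m) * w)
    (hτL : ∀ w, 0 ≤ w → τ w ≤ (1 + γ * L) * w)
    (w : ℝ) (hw : 0 ≤ w) :
    (∫ g : ℝ,
        (τ w + γ * c - 2 * σ * Real.sqrt γ * g) *
          (1 - pbar σ γ (τ w + γ * c) g) * stdG g) = τ w + γ * c ∧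
    τ w + γ * c ≤
      (if R₁ < w then (1 - γ * m) * w else 0) +
        (if 0 < w ∧ w ≤ R₁ then (1 + γ * L) * w else 0) + γ * c := by
  refine ⟨sticky_kernel_mean hσ.ne' hγ _, ?_⟩
  gcongr
  split_ifs with hR hw₀ hw₀
  · exact absurd hw₀.2 (not_le.mpr hR)
  · simpa using hτm w hR
  · simpa using hτL w hw
  · obtain rfl : w = 0 := le_antisymm (not_lt.mp fun hpos => hw₀ ⟨hpos, not_lt.mp hR⟩) hw
    simpa using hτL 0 le_rfl

theorem sticky_kernel_drift (σ γ c L m R₁ : ℝ) (τ : ℝ → ℝ)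
    (hσ : 0 < σ) (hγ : 0 < γ) (hc : 0 < c) (hL : 0 < L) (hm : 0 < m) (hR₁ : 0 ≤ R₁)
    (hτ0 : ∀ w, 0 ≤ w → 0 ≤ τ w)
    (hτm : ∀ w, R₁ < w → τ w ≤ (1 - γ * m) * w)
    (hτL : ∀ w, 0 ≤ w → τ w ≤ (1 + γ * L) * w)
    (w : ℝ) (hw : 0 ≤ w) :
    (∫ g : ℝ,
        (τ w + γ * c - 2 * σ * Real.sqrt γ * g) *
          (1 - pbar σ γ (τ w + γ * c) g) * stdG g) = τ w + γ * c ∧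
    τ w + γ * c ≤
      (if R₁ < w then (1 - γ * m) * w else 0) +
        (if 0 < w ∧ w ≤ R₁ then (1 + γ * L) * w else 0) + γ * c :=
  sticky_kernel_drift_general σ γ c L m R₁ τ hσ hγ hτm hτL w hw
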